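/- arXiv:math-ph/0610018 — 7 statements merged into one kernel-verified Lean document; each statement's English description precedes it below -/
import Mathlib

section
/- Let $A \in (1,2)$, $a > 0$, $g_* = (A-1)/a$, $\omega_0 \in (0,1)$. There exists a unique two-sided sequence $(\bar g_n)_{n \in \mathbb{Z}}$ in $(0, g_*)$ such that $\bar g_0 = \omega_0 g_*$ and $\bar g_{n+1} = f(\bar g_n)$ for all $n \in \mathbb{Z}$, where $f(x) = Ax - ax^2$. Moreover this sequence is strictly increasing, tends to $0$ as $n \to -\infty$, and tends to $g_*$ as $n \to +\infty$. -/
/-!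
On `[0, g⋆]` the map `f` is continuous and strictly increasing with fixed points `0` and `g⋆`,
so it is a bijection of `(0, g⋆)`; running it forwards and backwards from `ω₀ g⋆` gives the unique
two-sided orbit. Since `f x - x = a x (g⋆ - x) > 0` on `(0, g⋆)`, every such orbit is strictly
increasing; its limits at `±∞` exist by monotonicity, are fixed points of `f` by continuity, and
the only candidates are `0` and `g⋆`.
-/

open Filter Topology Set Function

theorem Set.BijOn.existsUnique_int_orbit {α : Type*} {f : α → α} {s : Set α} (h : BijOn f s s)
    {x : α} (hx : x ∈ s) :
    ∃! g : ℤ → α, (∀ n, g n ∈ s) ∧ g 0 = x ∧ ∀ n, g (n + 1) = f (g n) := by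
  let e : Equiv.Perm s := h.equiv f
  let orbit : ℤ → α := fun n => (e ^ n) ⟨x, hx⟩
  have orbit_succ (n : ℤ) : orbit (n + 1) = f (orbit n) := by
    simp only [orbit, add_comm n, zpow_one_add, Equiv.Perm.mul_apply]
    rfl
  refine ⟨orbit, ⟨fun n => ((e ^ n) ⟨x, hx⟩).2, rfl, orbit_succ⟩, ?_⟩
  rintro g ⟨hgs, hg0, hgf⟩
  funext n
  induction n using Int.induction_on with
  | zero => exact hg0
  | succ k ih => rw [hgf, ih, orbit_succ]
  | pred k ih =>
    refine h.injOn (hgs _) ((e ^ (-(k : ℤ) - 1)) ⟨x, hx⟩).2 ?_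
    rw [← hgf, ← orbit_succ, sub_add_cancel, ih]

theorem Filter.Tendsto.isFixedPt_of_int_orbit {α : Type*} [TopologicalSpace α] [T2Space α]
    {f : α → α} {g : ℤ → α} {l : Filter ℤ} [l.NeBot] {y : α}
    (hg : Tendsto g l (𝓝 y)) (hgf : ∀ n, g (n + 1) = f (g n))
    (hl : Tendsto (· + 1) l l) (hf : ContinuousAt f y) : IsFixedPt f y :=
  tendsto_nhds_unique ((hf.tendsto.comp hg).congr fun n => (hgf n).symm) (hg.comp hl)

theorem strictMono_int_orbit {α : Type*} [Preorder α] {f : α → α} {s : Set α} {g : ℤ → α}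
    (hlt : ∀ x ∈ s, x < f x) (hgs : ∀ n, g n ∈ s) (hgf : ∀ n, g (n + 1) = f (g n)) :
    StrictMono g :=
  strictMono_int_of_lt_succ fun n => hgf n ▸ hlt _ (hgs n)

section OrderTopology

variable {α : Type*} [ConditionallyCompleteLinearOrder α] [TopologicalSpace α] [OrderTopology α]
  {f : α → α} {lo hi : α}

theorem StrictMonoOn.bijOn_Ioo_of_isFixedPt [DenselyOrdered α] (hf : StrictMonoOn f (Icc lo hi))
    (hcont : ContinuousOn f (Icc lo hi)) (hlo : IsFixedPt f lo) (hhi : IsFixedPt f hi) :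
    BijOn f (Ioo lo hi) (Ioo lo hi) := by
  refine ⟨fun x hx => ?_, hf.injOn.mono Ioo_subset_Icc_self, fun y hy => ?_⟩
  · have hab : lo ≤ hi := (hx.1.trans hx.2).le
    constructor
    · simpa [hlo.eq] using hf (left_mem_Icc.2 hab) (Ioo_subset_Icc_self hx) hx.1
    · simpa [hhi.eq] using hf (Ioo_subset_Icc_self hx) (right_mem_Icc.2 hab) hx.2
  · have hab : lo ≤ hi := (hy.1.trans hy.2).le
    exact intermediate_value_Ioo hab hcont (by rwa [hlo.eq, hhi.eq])

variable {g : ℤ → α}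

theorem tendsto_atTop_int_orbit (hlt : ∀ x ∈ Ioo lo hi, x < f x)
    (hgs : ∀ n, g n ∈ Ioo lo hi) (hgf : ∀ n, g (n + 1) = f (g n)) (hf : Continuous f) :
    Tendsto g atTop (𝓝 hi) := by
  have hbdd : BddAbove (range g) := ⟨hi, forall_mem_range.2 fun n => (hgs n).2.le⟩
  have hlim := tendsto_atTop_ciSup (strictMono_int_orbit hlt hgs hgf).monotone hbdd
  have hfix : IsFixedPt f (⨆ n, g n) :=
    hlim.isFixedPt_of_int_orbit hgf (tendsto_atTop_add_const_right _ 1 tendsto_id) hf.continuousAt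
  suffices ⨆ n, g n = hi by rwa [this] at hlim
  refine (ciSup_le fun n => (hgs n).2.le).antisymm (not_lt.1 fun h => ?_)
  have hlo : lo < ⨆ n, g n := (hgs 0).1.trans_le (le_ciSup hbdd 0)
  exact (hlt _ ⟨hlo, h⟩).ne hfix.eq.symm

theorem tendsto_atBot_int_orbit (hlt : ∀ x ∈ Ioo lo hi, x < f x)
    (hgs : ∀ n, g n ∈ Ioo lo hi) (hgf : ∀ n, g (n + 1) = f (g n)) (hf : Continuous f) :
    Tendsto g atBot (𝓝 lo) := by
  have hbdd : BddBelow (range g) := ⟨lo, forall_mem_range.2 fun n => (hgs n).1.le⟩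
  have hlim := tendsto_atBot_ciInf (strictMono_int_orbit hlt hgs hgf).monotone hbdd
  have hfix : IsFixedPt f (⨅ n, g n) :=
    hlim.isFixedPt_of_int_orbit hgf (tendsto_atBot_add_const_right _ 1 tendsto_id) hf.continuousAt
  suffices ⨅ n, g n = lo by rwa [this] at hlim
  refine ((le_ciInf fun n => (hgs n).1.le).antisymm (not_lt.1 fun h => ?_)).symm
  have hhi : ⨅ n, g n < hi := (ciInf_le hbdd 0).trans_lt (hgs 0).2
  exact (hlt _ ⟨h, hhi⟩).ne hfix.eq.symm

end OrderTopology

def logisticMap (A a x : ℝ) : ℝ := A * x - a * x ^ 2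

section Logistic

variable {A a g x : ℝ}

theorem continuous_logisticMap : Continuous (logisticMap A a) := by
  unfold logisticMap
  fun_prop

theorem logisticMap_sub_self (hg : a * g = A - 1) (x : ℝ) :
    logisticMap A a x - x = a * x * (g - x) := by
  unfold logisticMap
  linear_combination (-x) * hg

theorem isFixedPt_logisticMap_zero : IsFixedPt (logisticMap A a) 0 := by
  simp [IsFixedPt, logisticMap]

theorem isFixedPt_logisticMap (hg : a * g = A - 1) : IsFixedPt (logisticMap A a) g :=
  sub_eq_zero.1 (by simpa using logisticMap_sub_self hg g)

theorem lt_logisticMap (ha : 0 < a) (hg : a * g = A - 1) (hx : x ∈ Ioo 0 g) :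
    x < logisticMap A a x := by
  have hpos : 0 < a * x * (g - x) := mul_pos (mul_pos ha hx.1) (sub_pos.2 hx.2)
  linarith [logisticMap_sub_self hg x]

theorem strictMonoOn_logisticMap (ha : 0 < a) (hA : A ≤ 2) (hg : a * g = A - 1) :
    StrictMonoOn (logisticMap A a) (Icc 0 g) := by
  intro x hx y hy hxy
  have hsum : a * (x + y) < A := by nlinarith [hy.2]
  have hdiff : logisticMap A a y - logisticMap A a x = (y - x) * (A - a * (x + y)) := by
    unfold logisticMap; ring
  nlinarith [mul_pos (sub_pos.2 hxy) (sub_pos.2 hsum)]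

end Logistic

/-- unique two-sided orbit of `f x = A x - a x²` in `(0, g⋆)` with
`ḡ₀ = ω₀ g⋆`; this orbit is strictly increasing, tends to `0` at `-∞` and to `g⋆` at `+∞`. -/
theorem stmt_1 (A a : ℝ) (hA1 : 1 < A) (hA2 : A < 2) (ha : 0 < a)
    (f : ℝ → ℝ) (hf : ∀ x, f x = A * x - a * x ^ 2)
    (gs : ℝ) (hgs : gs = (A - 1) / a)
    (ω0 : ℝ) (hω0 : ω0 ∈ Set.Ioo (0 : ℝ) 1) :
    (∃! gbar : ℤ → ℝ,
      (∀ n : ℤ, gbar n ∈ Set.Ioo 0 gs) ∧ gbar 0 = ω0 * gs ∧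
        (∀ n : ℤ, gbar (n + 1) = f (gbar n))) ∧
    (∀ gbar : ℤ → ℝ,
      ((∀ n : ℤ, gbar n ∈ Set.Ioo 0 gs) ∧ gbar 0 = ω0 * gs ∧
        (∀ n : ℤ, gbar (n + 1) = f (gbar n))) →
      StrictMono gbar ∧ Tendsto gbar atBot (𝓝 0) ∧ Tendsto gbar atTop (𝓝 gs)) := by
  obtain rfl : f = logisticMap A a := funext hf
  have hg : a * gs = A - 1 := by rw [hgs]; field_simp
  have hgs_pos : 0 < gs := by rw [hgs]; exact div_pos (by linarith) ha
  have hbij : BijOn (logisticMap A a) (Ioo 0 gs) (Ioo 0 gs) :=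
    (strictMonoOn_logisticMap ha hA2.le hg).bijOn_Ioo_of_isFixedPt
      continuous_logisticMap.continuousOn isFixedPt_logisticMap_zero (isFixedPt_logisticMap hg)
  have hx0 : ω0 * gs ∈ Ioo 0 gs := ⟨mul_pos hω0.1 hgs_pos, mul_lt_of_lt_one_left hgs_pos hω0.2⟩
  have hlt : ∀ x ∈ Ioo 0 gs, x < logisticMap A a x := fun x hx => lt_logisticMap ha hg hx
  refine ⟨hbij.existsUnique_int_orbit hx0, fun g ⟨hmem, _, hrec⟩ => ⟨?_, ?_, ?_⟩⟩
  · exact strictMono_int_orbit hlt hmem hrec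
  · exact tendsto_atBot_int_orbit hlt hmem hrec continuous_logisticMap
  · exact tendsto_atTop_int_orbit hlt hmem hrec continuous_logisticMap
end

section
/- With $f(x) = Ax - ax^2$, $A \in (1,2)$, $a>0$, $g_* = (A-1)/a$, $\omega_0 \in (0,1)$, and $(\bar g_n)_{n\in\mathbb{Z}}$ the orbit with $\bar g_0 = \omega_0 g_*$: for every nonnegative integer $n$, one has $g_*\bigl(1-(1-\omega_0)(1+\omega_0 - A\omega_0)^n\bigr) \le \bar g_n \le g_*\bigl(1-(1-\omega_0)(2-A)^n\bigr)$. -/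
/-- bounds on the forward part of the orbit:
`g⋆(1-(1-ω₀)(1+ω₀-Aω₀)ⁿ) ≤ ḡₙ ≤ g⋆(1-(1-ω₀)(2-A)ⁿ)` for all `n ≥ 0`. -/
theorem stmt_2 (A a : ℝ) (hA1 : 1 < A) (hA2 : A < 2) (ha : 0 < a)
    (f : ℝ → ℝ) (hf : ∀ x, f x = A * x - a * x ^ 2)
    (gs : ℝ) (hgs : gs = (A - 1) / a)
    (ω0 : ℝ) (hω0 : ω0 ∈ Set.Ioo (0 : ℝ) 1)
    (gbar : ℤ → ℝ) (hmem : ∀ n : ℤ, gbar n ∈ Set.Ioo 0 gs)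
    (h0 : gbar 0 = ω0 * gs) (hrec : ∀ n : ℤ, gbar (n + 1) = f (gbar n)) :
    ∀ n : ℕ,
      gs * (1 - (1 - ω0) * (1 + ω0 - A * ω0) ^ n) ≤ gbar (n : ℤ) ∧
      gbar (n : ℤ) ≤ gs * (1 - (1 - ω0) * (2 - A) ^ n) := by
  obtain ⟨hω0l, hω0r⟩ := hω0
  have hgsp : 0 < gs := by rw [hgs]; exact div_pos (by linarith) ha
  have hags : a * gs = A - 1 := by
    rw [hgs]; field_simp
  have hstep : ∀ n : ℤ, gs - gbar (n + 1) = (gs - gbar n) * (1 - a * gbar n) := by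
    intro n
    rw [hrec, hf]
    linear_combination (gbar n) * hags
  have hr1 : 0 < 1 + ω0 - A * ω0 := by nlinarith
  have hr1' : 1 + ω0 - A * ω0 < 1 := by nlinarith
  intro n
  induction n with
  | zero =>
      simp only [pow_zero, mul_one, Nat.cast_zero, h0]
      constructor <;> nlinarith
  | succ n ih =>
      obtain ⟨ihl, ihu⟩ := ih
      obtain ⟨hx0, hxgs⟩ := hmem (n : ℤ)
      have hkey := hstep (n : ℤ)
      have hcast : ((n + 1 : ℕ) : ℤ) = (n : ℤ) + 1 := by push_cast; ring
      rw [hcast]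
      have hr1n : (0:ℝ) ≤ (1 + ω0 - A * ω0) ^ n := le_of_lt (pow_pos hr1 n)
      have hr1n1 : (1 + ω0 - A * ω0) ^ n ≤ 1 :=
        pow_le_one₀ (le_of_lt hr1) (le_of_lt hr1')
      have hr2n : (0:ℝ) ≤ (2 - A) ^ n := le_of_lt (pow_pos (by linarith) n)
      have hax : a * gbar (n : ℤ) < A - 1 := by nlinarith
      have hxlow : ω0 * gs ≤ gbar (n : ℤ) := by
        have hp : gs * ((1 - ω0) * (1 + ω0 - A * ω0) ^ n) ≤ gs * ((1 - ω0) * 1) := by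
          apply mul_le_mul_of_nonneg_left _ hgsp.le
          apply mul_le_mul_of_nonneg_left hr1n1 (by linarith)
        nlinarith [ihl, hp]
      constructor
      · -- lower bound
        have h1 : 1 - a * gbar (n : ℤ) ≤ 1 + ω0 - A * ω0 := by nlinarith
        have h2 : gs - gbar (n : ℤ) ≤ gs * (1 - ω0) * (1 + ω0 - A * ω0) ^ n := by
          nlinarith [ihl]
        have h4 : (0:ℝ) ≤ 1 - a * gbar (n : ℤ) := by nlinarith
        have h5 : (0:ℝ) ≤ gs * (1 - ω0) * (1 + ω0 - A * ω0) ^ n := mul_nonneg (mul_nonneg hgsp.le (by linarith)) hr1n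
        have hfin : gs - gbar ((n : ℤ) + 1)
            ≤ gs * ((1 - ω0) * (1 + ω0 - A * ω0) ^ (n + 1)) := by
          rw [hkey]
          calc (gs - gbar (n : ℤ)) * (1 - a * gbar (n : ℤ))
              ≤ (gs * (1 - ω0) * (1 + ω0 - A * ω0) ^ n) * (1 + ω0 - A * ω0) :=
                mul_le_mul h2 h1 h4 h5
            _ = gs * ((1 - ω0) * (1 + ω0 - A * ω0) ^ (n + 1)) := by ring
        linarith [hfin]
      · -- upper bound
        have h1 : 2 - A ≤ 1 - a * gbar (n : ℤ) := by nlinarith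
        have h2 : gs * (1 - ω0) * (2 - A) ^ n ≤ gs - gbar (n : ℤ) := by
          nlinarith [ihu]
        have h4 : (0:ℝ) ≤ gs * (1 - ω0) * (2 - A) ^ n := mul_nonneg (mul_nonneg hgsp.le (by linarith)) hr2n
        have hfin : gs * ((1 - ω0) * (2 - A) ^ (n + 1)) ≤ gs - gbar ((n : ℤ) + 1) := by
          rw [hkey]
          calc gs * ((1 - ω0) * (2 - A) ^ (n + 1))
              = (gs * (1 - ω0) * (2 - A) ^ n) * (2 - A) := by ring
            _ ≤ (gs - gbar (n : ℤ)) * (1 - a * gbar (n : ℤ)) :=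
                mul_le_mul h2 h1 (by linarith) (by linarith)
        linarith [hfin]
end

section
/- With $f(x) = Ax - ax^2$, $A \in (1,2)$, $a>0$, $g_* = (A-1)/a$, $\omega_0 \in (0,1)$, and $(\bar g_n)_{n\in\mathbb{Z}}$ the orbit with $\bar g_0 = \omega_0 g_*$: for every nonpositive integer $n$, one has $g_* \omega_0 A^{n} \le \bar g_n \le g_* \omega_0 \left(\frac{2}{A + \sqrt{A^2 - 4\omega_0(A-1)}}\right)^{-n}$. -/
set_option maxHeartbeats 1600000


/-- bounds on the backward part of the orbit:
`g⋆ ω₀ Aⁿ ≤ ḡₙ ≤ g⋆ ω₀ (2/(A+√(A²-4ω₀(A-1))))^{-n}` for all `n ≤ 0`. -/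
theorem stmt_3 (A a : ℝ) (hA1 : 1 < A) (hA2 : A < 2) (ha : 0 < a)
    (f : ℝ → ℝ) (hf : ∀ x, f x = A * x - a * x ^ 2)
    (gs : ℝ) (hgs : gs = (A - 1) / a)
    (ω0 : ℝ) (hω0 : ω0 ∈ Set.Ioo (0 : ℝ) 1)
    (gbar : ℤ → ℝ) (hmem : ∀ n : ℤ, gbar n ∈ Set.Ioo 0 gs)
    (h0 : gbar 0 = ω0 * gs) (hrec : ∀ n : ℤ, gbar (n + 1) = f (gbar n)) :
    ∀ n : ℤ, n ≤ 0 →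
      gs * ω0 * A ^ n ≤ gbar n ∧
      gbar n ≤ gs * ω0 * (2 / (A + Real.sqrt (A ^ 2 - 4 * ω0 * (A - 1)))) ^ (-n) := by
  obtain ⟨hω0p, hω0l⟩ := hω0
  have hA0 : (0:ℝ) < A := by linarith
  have hgsp : 0 < gs := by rw [hgs]; exact div_pos (by linarith) ha
  set s := Real.sqrt (A ^ 2 - 4 * ω0 * (A - 1)) with hs
  set r := 2 / (A + s) with hr
  have hDnn : (0:ℝ) ≤ A ^ 2 - 4 * ω0 * (A - 1) := by nlinarith
  have hs0 : 0 ≤ s := Real.sqrt_nonneg _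
  have hssq : s ^ 2 = A ^ 2 - 4 * ω0 * (A - 1) := Real.sq_sqrt hDnn
  have hs2A : 2 - A ≤ s := by
    have : Real.sqrt ((2 - A)^2) ≤ s := by
      apply Real.sqrt_le_sqrt; nlinarith
    rwa [Real.sqrt_sq (by linarith)] at this
  have hAs2 : (2:ℝ) ≤ A + s := by linarith
  have hAsp : (0:ℝ) < A + s := by linarith
  have hrp : 0 < r := by rw [hr]; positivity
  have hr1 : r ≤ 1 := by
    rw [hr, div_le_one hAsp]; linarith
  -- key step
  have step : ∀ m : ℤ, gbar (m + 1) ≤ ω0 * gs →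
      gbar (m + 1) ≤ A * gbar m ∧ gbar m ≤ r * gbar (m + 1) := by
    intro m hy
    obtain ⟨hx0, hxg⟩ := hmem m
    obtain ⟨hy0, _⟩ := hmem (m + 1)
    have hxy : gbar (m + 1) = A * gbar m - a * gbar m ^ 2 := by rw [hrec m, hf]
    constructor
    · nlinarith
    · have hax : a * gbar m < A - 1 := by
        rw [hgs, lt_div_iff₀ ha] at hxg; nlinarith
      have hA2ax : 0 < A - 2 * a * gbar m := by linarith
      have hsle : s ≤ A - 2 * a * gbar m := by
        have h1 : s ≤ Real.sqrt ((A - 2 * a * gbar m)^2) := by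
          apply Real.sqrt_le_sqrt
          have : a * gbar (m+1) ≤ a * (ω0 * gs) := by nlinarith
          rw [hgs] at this
          have hgsa : a * (ω0 * ((A-1)/a)) = ω0 * (A-1) := by field_simp
          nlinarith
        rwa [Real.sqrt_sq (le_of_lt hA2ax)] at h1
      have h2 : gbar m * (A + s) ≤ 2 * gbar (m + 1) := by nlinarith
      rw [hr, div_mul_eq_mul_div, le_div_iff₀ hAsp]
      linarith [h2]
  -- induction over ℕ
  have main : ∀ k : ℕ, gs * ω0 ≤ A ^ k * gbar (-(k:ℤ)) ∧ gbar (-(k:ℤ)) ≤ gs * ω0 * r ^ k := by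
    intro k
    induction k with
    | zero => simp [h0]; constructor <;> nlinarith
    | succ k ih =>
      obtain ⟨ihl, ihr⟩ := ih
      have hle : gbar (-(k:ℤ)) ≤ ω0 * gs := by
        have h1 : r ^ k ≤ 1 := pow_le_one₀ (le_of_lt hrp) hr1
        nlinarith [mul_pos hgsp hω0p]
      have hm : (-(↑(k+1):ℤ)) + 1 = -(k:ℤ) := by omega
      have := step (-(↑(k+1):ℤ)) (by rw [hm]; exact hle)
      rw [hm] at this
      obtain ⟨h1, h2⟩ := this
      obtain ⟨hx0, _⟩ := hmem (-(↑(k+1):ℤ))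
      constructor
      · have hAk : (0:ℝ) < A ^ k := by positivity
        calc gs * ω0 ≤ A ^ k * gbar (-(k:ℤ)) := ihl
          _ ≤ A ^ k * (A * gbar (-(↑(k+1):ℤ))) := by nlinarith
          _ = A ^ (k+1) * gbar (-(↑(k+1):ℤ)) := by ring
      · calc gbar (-(↑(k+1):ℤ)) ≤ r * gbar (-(k:ℤ)) := h2
          _ ≤ r * (gs * ω0 * r ^ k) := by nlinarith
          _ = gs * ω0 * r ^ (k+1) := by ring
  intro n hn
  obtain ⟨k, hk⟩ : ∃ k : ℕ, n = -(k:ℤ) := ⟨(-n).toNat, by omega⟩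
  subst hk
  obtain ⟨hl, hu⟩ := main k
  have hAk : (0:ℝ) < A ^ k := by positivity
  constructor
  · have : A ^ (-(k:ℤ)) = (A ^ k)⁻¹ := by
      rw [zpow_neg, zpow_natCast]
    rw [this]
    rw [mul_inv_le_iff₀ hAk]
    linarith [hl]
  · have : r ^ (-(-(k:ℤ))) = r ^ k := by
      rw [neg_neg, zpow_natCast]
    rw [this]
    exact hu
end

section
/- Let $f(x) = Ax - ax^2$ with $A \in (1,2)$, $a>0$, $g_* = (A-1)/a$, and $(\bar g_n)_{n\in\mathbb{Z}}$ the orbit with $\bar g_0 = \omega_0 g_*$, $\omega_0 \in (0,1)$. Then for any integers $p < n$ with $p \ge 0$, the product satisfies $\prod_{p < j < n} \frac{f'(\bar g_j)}{2-A} \le \exp\!\left[\frac{2(1-\omega_0)(1+\omega_0 - A\omega_0)}{\omega_0 (2-A)}\right]$. -/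
/-!
Write `r = 1 + ω₀ - Aω₀`. Since `g_* - f(x) = (g_* - x)((2 - A) + a(g_* - x))` and the second factor
is at most `r` while `g_* - x ≤ g_*(1 - ω₀)`, the deficit `g_* - ḡ_j` stays in `[0, g_*(1 - ω₀) r^j]`
along the forward orbit. Each factor equals `1 + 2a(g_* - ḡ_j)/(2 - A) ≤ exp(2a(g_* - ḡ_j)/(2 - A))`,
so the product is bounded by the exponential of a geometric series, which sums to the stated
constant because `1 - r = ω₀ a g_*`.
-/

open Finset Real

lemma Int.prod_Ioo_natCast {M : Type*} [CommMonoid M] (u : ℤ → M) (p n : ℕ) :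
    ∏ j ∈ Ioo (p : ℤ) n, u j = ∏ k ∈ Ioo p n, u k := by
  have hmap : (Ioo p n).map Nat.castEmbedding = Ioo (p : ℤ) n := by
    rw [← coe_inj, coe_map, coe_Ioo, coe_Ioo]
    exact Nat.image_cast_int_Ioo p n
  rw [← hmap, prod_map]
  rfl

lemma sum_Ioo_pow_le_div_one_sub {r : ℝ} (hr0 : 0 ≤ r) (hr1 : r < 1) (p n : ℕ) :
    ∑ k ∈ Ioo p n, r ^ k ≤ r / (1 - r) :=
  calc ∑ k ∈ Ioo p n, r ^ k ≤ ∑ k ∈ Ico 1 n, r ^ k :=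
        sum_le_sum_of_subset_of_nonneg (fun k hk => by simp only [mem_Ioo, mem_Ico] at *; omega)
          (fun k _ _ => pow_nonneg hr0 k)
    _ ≤ r ^ 1 / (1 - r) := geom_sum_Ico_le_of_lt_one hr0 hr1
    _ = r / (1 - r) := by rw [pow_one]

section Logistic

variable {A a gs : ℝ}

lemma fixedPoint_sub_logistic (hags : a * gs = A - 1) (x : ℝ) :
    gs - (A * x - a * x ^ 2) = (gs - x) * ((2 - A) + a * (gs - x)) := by
  linear_combination (2 * x - gs) * hags

lemma logistic_deficit_le {ω : ℝ} (hA1 : 1 ≤ A) (hA2 : A ≤ 2) (ha : 0 < a)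
    (hags : a * gs = A - 1) (hω0 : 0 ≤ ω) (hω1 : ω ≤ 1) {g : ℕ → ℝ} (h0 : g 0 = ω * gs)
    (hrec : ∀ k, g (k + 1) = A * g k - a * g k ^ 2) (k : ℕ) :
    0 ≤ gs - g k ∧ gs - g k ≤ gs * (1 - ω) * (1 + ω - A * ω) ^ k := by
  have hgs : 0 ≤ gs := by nlinarith
  have hr0 : 0 ≤ 1 + ω - A * ω := by nlinarith
  have hr1 : 1 + ω - A * ω ≤ 1 := by nlinarith
  induction k with
  | zero => constructor <;> rw [h0] <;> nlinarith
  | succ k ih =>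
    obtain ⟨hd0, hd1⟩ := ih
    have hpow : (1 + ω - A * ω) ^ k ≤ 1 := pow_le_one₀ hr0 hr1
    have hfactor : (2 - A) + a * (gs - g k) ≤ 1 + ω - A * ω := by
      have : a * (gs - g k) ≤ a * (gs * (1 - ω)) := by
        gcongr
        exact hd1.trans (mul_le_of_le_one_right (by nlinarith) hpow)
      linear_combination this + (1 - ω) * hags
    rw [hrec, fixedPoint_sub_logistic hags, pow_succ, ← mul_assoc]
    exact ⟨by positivity, mul_le_mul hd1 hfactor (by positivity) (by positivity)⟩

theorem prod_logistic_deriv_le_exp {ω : ℝ} (hA1 : 1 < A) (hA2 : A < 2) (ha : 0 < a)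
    (hags : a * gs = A - 1) (hω0 : 0 < ω) (hω1 : ω ≤ 1) {g : ℕ → ℝ} (h0 : g 0 = ω * gs)
    (hrec : ∀ k, g (k + 1) = A * g k - a * g k ^ 2) (p n : ℕ) :
    ∏ k ∈ Ioo p n, (A - 2 * a * g k) / (2 - A) ≤
      exp (2 * (1 - ω) * (1 + ω - A * ω) / (ω * (2 - A))) := by
  set r := 1 + ω - A * ω with hr
  set c := 2 * a / (2 - A)
  have h2A : 0 < 2 - A := by linarith
  have hc : 0 ≤ c := by positivity
  have hdef := logistic_deficit_le hA1.le hA2.le ha hags hω0.le hω1 h0 hrec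
  have hfactor : ∀ k, (A - 2 * a * g k) / (2 - A) = 1 + c * (gs - g k) := fun k => by
    simp only [c]
    field_simp
    linear_combination -2 * hags
  have hsum : ∑ k ∈ Ioo p n, c * (gs - g k) ≤ c * (gs * (1 - ω)) * (r / (1 - r)) := by
    rw [← mul_sum, mul_assoc]
    gcongr
    calc ∑ k ∈ Ioo p n, (gs - g k) ≤ ∑ k ∈ Ioo p n, gs * (1 - ω) * r ^ k :=
          sum_le_sum fun k _ => (hdef k).2
      _ ≤ gs * (1 - ω) * (r / (1 - r)) := by
          rw [← mul_sum]
          have : 0 ≤ gs * (1 - ω) := by nlinarith [(hdef 0).1, (hdef 0).2]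
          gcongr
          exact sum_Ioo_pow_le_div_one_sub (by nlinarith) (by nlinarith) p n
  calc ∏ k ∈ Ioo p n, (A - 2 * a * g k) / (2 - A) = ∏ k ∈ Ioo p n, (1 + c * (gs - g k)) :=
        prod_congr rfl fun k _ => hfactor k
    _ ≤ exp (∑ k ∈ Ioo p n, c * (gs - g k)) :=
        prod_one_add_le_exp_sum _ fun k => mul_nonneg hc (hdef k).1
    _ ≤ exp (c * (gs * (1 - ω)) * (r / (1 - r))) := exp_le_exp.mpr hsum
    _ = exp (2 * (1 - ω) * r / (ω * (2 - A))) := by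
        have h1r : 1 - r = ω * (a * gs) := by rw [hags, hr]; ring
        have hgs : gs ≠ 0 := by rintro rfl; linarith
        rw [h1r]
        congr 1
        simp only [c]
        field_simp

end Logistic

theorem stmt_7_general (A a : ℝ) (hA1 : 1 < A) (hA2 : A < 2) (ha : 0 < a)
    (f : ℝ → ℝ) (hf : ∀ x, f x = A * x - a * x ^ 2)
    (gs : ℝ) (hgs : gs = (A - 1) / a)
    (ω0 : ℝ) (hω0 : ω0 ∈ Set.Ioo (0 : ℝ) 1)
    (gbar : ℤ → ℝ)
    (h0 : gbar 0 = ω0 * gs) (hrec : ∀ n : ℤ, gbar (n + 1) = f (gbar n)) :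
    ∀ p n : ℤ, 0 ≤ p → p < n →
      ∏ j ∈ Finset.Ioo p n, (A - 2 * a * gbar j) / (2 - A) ≤
        Real.exp (2 * (1 - ω0) * (1 + ω0 - A * ω0) / (ω0 * (2 - A))) := by
  intro p n hp hpn
  lift p to ℕ using hp
  lift n to ℕ using by omega
  have hags : a * gs = A - 1 := by rw [hgs]; field_simp
  rw [Int.prod_Ioo_natCast (fun j => (A - 2 * a * gbar j) / (2 - A))]
  exact prod_logistic_deriv_le_exp hA1 hA2 ha hags hω0.1 hω0.2.le (g := fun k => gbar k) h0
    (fun k => by push_cast; rw [hrec, hf]) p n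

/-- for `0 ≤ p < n`,
`∏_{p<j<n} f'(ḡ_j)/(2-A) ≤ exp[ 2(1-ω₀)(1+ω₀-Aω₀) / (ω₀(2-A)) ]`, where `f'(x) = A - 2ax`. -/
theorem stmt_7 (A a : ℝ) (hA1 : 1 < A) (hA2 : A < 2) (ha : 0 < a)
    (f : ℝ → ℝ) (hf : ∀ x, f x = A * x - a * x ^ 2)
    (gs : ℝ) (hgs : gs = (A - 1) / a)
    (ω0 : ℝ) (hω0 : ω0 ∈ Set.Ioo (0 : ℝ) 1)
    (gbar : ℤ → ℝ) (hmem : ∀ n : ℤ, gbar n ∈ Set.Ioo 0 gs)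
    (h0 : gbar 0 = ω0 * gs) (hrec : ∀ n : ℤ, gbar (n + 1) = f (gbar n)) :
    ∀ p n : ℤ, 0 ≤ p → p < n →
      ∏ j ∈ Finset.Ioo p n, (A - 2 * a * gbar j) / (2 - A) ≤
        Real.exp (2 * (1 - ω0) * (1 + ω0 - A * ω0) / (ω0 * (2 - A))) :=
  stmt_7_general A a hA1 hA2 ha f hf gs hgs ω0 hω0 gbar h0 hrec
end

section
/- Let $f(x) = Ax - ax^2$ with $A \in (1,2)$, $a>0$, $g_* = (A-1)/a$, $\omega_0 \in (0,1)$, and $(\bar g_n)_{n\in\mathbb{Z}}$ the orbit with $\bar g_0 = \omega_0 g_*$. For any real exponents $\gamma, \nu \ge 0$ and every integer $n > 0$, $\frac{1}{\bar g_n^{\gamma}} \sum_{0 \le p < n} \bar g_p^{\nu} \prod_{p < j < n} f'(\bar g_j) \;\le\; \frac{\omega_0^{-\gamma} g_*^{\nu - \gamma}}{A - 1} \exp\!\left[\frac{2(1-\omega_0)(1+\omega_0 - A\omega_0)}{\omega_0 (2-A)}\right]$. -/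
/-!
Put `v j = a (g⋆ - ḡ j)` and `λ j = 1 - a ḡ j`. Then `v (j+1) = λ j v j` and `f'(ḡ j) = λ j + v j`,
and since the orbit increases, `2 - A ≤ λ j ≤ L := 1 - ω₀ (A - 1)` for `j ≥ 0`. Hence
`f'(ḡ j) ≤ L exp (v j / (2 - A))`, while `v` decays geometrically with ratio `L`, so that
`∑_{j ≥ 1} v j ≤ L v₀ / (1 - L)`. The products are thus at most
`L ^ (n-1-p) exp (L v₀ / ((1 - L)(2 - A)))`, and summing over `p` gives the factor
`1 / (1 - L) = 1 / (ω₀ (A - 1))`. The factor `1 / ω₀` left over from `ḡ n ^ (-γ) ≤ (ω₀ g⋆) ^ (-γ)`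
is absorbed by a second copy of the exponential, since `1 / ω₀ ≤ exp ((1 - ω₀) / ω₀)`.
-/

open Finset Real

noncomputable def backwardSum {R : Type*} [CommSemiring R] (c d : ℤ → R) (n : ℤ) : R :=
  ∑ p ∈ Ico 0 n, c p * ∏ j ∈ Ioo p n, d j

theorem backwardSum_zero {R : Type*} [CommSemiring R] (c d : ℤ → R) : backwardSum c d 0 = 0 := by
  simp [backwardSum]

theorem backwardSum_add_one {R : Type*} [CommSemiring R] (c d : ℤ → R) {n : ℤ} (hn : 0 ≤ n) :
    backwardSum c d (n + 1) = d n * backwardSum c d n + c n := by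
  have hprod : ∀ p ∈ Ico 0 n, ∏ j ∈ Ioo p (n + 1), d j = d n * ∏ j ∈ Ioo p n, d j := fun p hp => by
    rw [Ioo_add_one_right_eq_Ioc, ← Ioo_insert_right (mem_Ico.1 hp).2, prod_insert (by simp)]
  rw [backwardSum, Ico_add_one_right_eq_Icc, ← Ico_insert_right hn, sum_insert (by simp),
    Ioo_add_one_right_eq_Ioc, Ioc_self, prod_empty, mul_one, add_comm, backwardSum, mul_sum]
  congr 1
  refine sum_congr rfl fun p hp => ?_
  rw [hprod p hp, mul_left_comm]

theorem backwardSum_nonneg {c d : ℤ → ℝ} (hc : ∀ n, 0 ≤ n → 0 ≤ c n) (hd : ∀ n, 0 ≤ n → 0 ≤ d n)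
    (n : ℤ) : 0 ≤ backwardSum c d n :=
  sum_nonneg fun p hp => mul_nonneg (hc p (mem_Ico.1 hp).1) <|
    prod_nonneg fun j hj => hd j ((mem_Ico.1 hp).1.trans (mem_Ioo.1 hj).1.le)

theorem apply_le_apply_zero_of_contracting {v lam : ℤ → ℝ} (hlam : ∀ n, 0 ≤ n → lam n ≤ 1)
    (hv : ∀ n, 0 ≤ n → 0 ≤ v n) (hv_succ : ∀ n, 0 ≤ n → v (n + 1) = lam n * v n) {n : ℤ}
    (hn : 0 ≤ n) : v n ≤ v 0 := by
  induction n, hn using Int.leInduction with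
  | base => rfl
  | succ k hk ih =>
    rw [hv_succ k hk]
    nlinarith [hlam k hk, hv k hk]

theorem add_le_mul_exp_div {lam v m L : ℝ} (hm : 0 < m) (hmL : m ≤ L) (hlam : lam ≤ L)
    (hv : 0 ≤ v) :
    lam + v ≤ L * exp (v / m) := by
  have hvm : v ≤ L * (v / m) := by
    rw [mul_div_assoc', le_div_iff₀ hm, mul_comm L]; exact mul_le_mul_of_nonneg_left hmL hv
  nlinarith [add_one_le_exp (v / m), hm.le.trans hmL]

theorem backwardSum_le_of_contracting {c lam v : ℤ → ℝ} {m L B : ℝ} (hm : 0 < m) (hL : L < 1)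
    (hm_le : ∀ n, 0 ≤ n → m ≤ lam n) (hle_L : ∀ n, 0 ≤ n → lam n ≤ L)
    (hv : ∀ n, 0 ≤ n → 0 ≤ v n) (hv_succ : ∀ n, 0 ≤ n → v (n + 1) = lam n * v n)
    (hc : ∀ n, 0 ≤ n → 0 ≤ c n) (hcB : ∀ n, 0 ≤ n → c n ≤ B) {n : ℤ} (hn : 0 ≤ n) :
    backwardSum c (lam + v) n ≤ B / (1 - L) * exp (L * v 0 / ((1 - L) * m)) := by
  have h1L : 0 < 1 - L := sub_pos.2 hL
  have hL0 : 0 ≤ L := hm.le.trans ((hm_le 0 le_rfl).trans (hle_L 0 le_rfl))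
  have hC : 0 ≤ B / (1 - L) := div_nonneg ((hc 0 le_rfl).trans (hcB 0 le_rfl)) h1L.le
  have hv_le : ∀ n, 0 ≤ n → v n ≤ v 0 :=
    fun n hn =>
      apply_le_apply_zero_of_contracting (fun k hk => (hle_L k hk).trans hL.le) hv hv_succ hn
  -- `Φ` grows by at least `v k / m` per step and is nonnegative from step 1 on, which makes
  -- `B / (1 - L) * exp (Φ k)` a supersolution of the recursion `S (k+1) = (lam k + v k) S k + c k`.
  set Φ : ℤ → ℝ := fun k => (L * v 0 - v k) / ((1 - L) * m) with hΦ
  have hΦ_succ : ∀ k, 0 ≤ k → Φ k + v k / m ≤ Φ (k + 1) := by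
    intro k hk
    have hcontr : v (k + 1) ≤ L * v k := by
      rw [hv_succ k hk]; exact mul_le_mul_of_nonneg_right (hle_L k hk) (hv k hk)
    have hvm : v k / m = (1 - L) * v k / ((1 - L) * m) := by field_simp
    rw [hvm, hΦ, ← add_div]
    exact div_le_div_of_nonneg_right (by linarith) (mul_pos h1L hm).le
  have hΦ_nonneg : ∀ k, 0 ≤ k → 0 ≤ Φ (k + 1) := by
    intro k hk
    refine div_nonneg ?_ (mul_pos h1L hm).le
    rw [hv_succ k hk, sub_nonneg]
    calc lam k * v k ≤ L * v k := mul_le_mul_of_nonneg_right (hle_L k hk) (hv k hk)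
      _ ≤ L * v 0 := mul_le_mul_of_nonneg_left (hv_le k hk) hL0
  have hbound : ∀ k, 0 ≤ k → backwardSum c (lam + v) k ≤ B / (1 - L) * exp (Φ k) := by
    intro k hk
    induction k, hk using Int.leInduction with
    | base => rw [backwardSum_zero]; positivity
    | succ k hk ih =>
      have hd : lam k + v k ≤ L * exp (v k / m) :=
        add_le_mul_exp_div hm ((hm_le k hk).trans (hle_L k hk)) (hle_L k hk) (hv k hk)
      have hS := backwardSum_nonneg hc
        (fun j hj => add_nonneg (hm.le.trans (hm_le j hj)) (hv j hj)) k
      have hexp : exp (Φ k) * exp (v k / m) ≤ exp (Φ (k + 1)) := by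
        rw [← exp_add, add_comm]; exact exp_le_exp.2 (by linarith [hΦ_succ k hk])
      have hone : 1 ≤ exp (Φ (k + 1)) := one_le_exp (hΦ_nonneg k hk)
      rw [backwardSum_add_one _ _ hk, Pi.add_apply]
      calc (lam k + v k) * backwardSum c (lam + v) k + c k
          ≤ L * exp (v k / m) * (B / (1 - L) * exp (Φ k)) + B :=
            add_le_add (mul_le_mul hd ih hS (mul_nonneg hL0 (exp_pos _).le)) (hcB k hk)
        _ = L * (B / (1 - L)) * (exp (Φ k) * exp (v k / m)) + (1 - L) * (B / (1 - L)) := by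
            field_simp
        _ ≤ L * (B / (1 - L)) * exp (Φ (k + 1)) + (1 - L) * (B / (1 - L)) * exp (Φ (k + 1)) :=
            add_le_add (mul_le_mul_of_nonneg_left hexp (mul_nonneg hL0 hC))
              (le_mul_of_one_le_right (mul_nonneg h1L.le hC) hone)
        _ = B / (1 - L) * exp (Φ (k + 1)) := by ring
  refine (hbound n hn).trans (mul_le_mul_of_nonneg_left (exp_le_exp.2 ?_) hC)
  exact div_le_div_of_nonneg_right (by linarith [hv n hn]) (mul_pos h1L hm).le

section Logistic

variable {A a gs : ℝ} {g : ℤ → ℝ}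

theorem logistic_gap_succ (ha : a ≠ 0) (hgs : gs = (A - 1) / a)
    (hrec : ∀ n, g (n + 1) = A * g n - a * g n ^ 2) (n : ℤ) :
    a * (gs - g (n + 1)) = (1 - a * g n) * (a * (gs - g n)) := by
  rw [hrec, hgs]; field_simp; ring

theorem logistic_orbit_ge (ha : 0 < a) (hgs : gs = (A - 1) / a)
    (hrec : ∀ n, g (n + 1) = A * g n - a * g n ^ 2) (hmem : ∀ n, g n ∈ Set.Ioo 0 gs) {n : ℤ}
    (hn : 0 ≤ n) : g 0 ≤ g n := by
  have := apply_le_apply_zero_of_contracting (fun k _ => by nlinarith [(hmem k).1])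
    (fun k _ => (mul_pos ha (sub_pos.2 (hmem k).2)).le)
    (fun k _ => logistic_gap_succ ha.ne' hgs hrec k) hn
  nlinarith

theorem logistic_backwardSum_le {ν : ℝ} (hA2 : A < 2) (ha : 0 < a) (hgs : gs = (A - 1) / a)
    (hrec : ∀ n, g (n + 1) = A * g n - a * g n ^ 2) (hmem : ∀ n, g n ∈ Set.Ioo 0 gs)
    (hν : 0 ≤ ν) {n : ℤ} (hn : 0 ≤ n) :
    backwardSum (fun p => g p ^ ν) (fun j => A - 2 * a * g j) n ≤
      gs ^ ν / (a * g 0) * exp ((1 - a * g 0) * (a * (gs - g 0)) / (a * g 0 * (2 - A))) := by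
  have hags : a * gs = A - 1 := by rw [hgs]; field_simp
  have hderiv : (fun j => A - 2 * a * g j) = (fun j => 1 - a * g j) + fun j => a * (gs - g j) := by
    funext j; rw [Pi.add_apply]; linear_combination -hags
  rw [hderiv]
  convert backwardSum_le_of_contracting (m := 2 - A) (L := 1 - a * g 0) (sub_pos.2 hA2)
    (by nlinarith [(hmem 0).1]) (fun k _ => by nlinarith [(hmem k).2])
    (fun k hk => by nlinarith [logistic_orbit_ge ha hgs hrec hmem hk])
    (fun k _ => (mul_pos ha (sub_pos.2 (hmem k).2)).le)
    (fun k _ => logistic_gap_succ ha.ne' hgs hrec k)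
    (fun k _ => rpow_nonneg (hmem k).1.le ν)
    (fun k _ => rpow_le_rpow (hmem k).1.le (hmem k).2.le hν) hn using 3 <;> ring

end Logistic

theorem one_div_le_exp_one_sub_div {ω m L : ℝ} (hω0 : 0 < ω) (hω1 : ω < 1) (hm : 0 < m)
    (hmL : m ≤ L) :
    1 / ω ≤ exp ((1 - ω) * L / (ω * m)) :=
  calc 1 / ω = (1 - ω) / ω + 1 := by field_simp; ring
    _ ≤ exp ((1 - ω) / ω) := add_one_le_exp _
    _ ≤ exp ((1 - ω) * L / (ω * m)) := by
      rw [exp_le_exp, div_le_div_iff₀ hω0 (mul_pos hω0 hm)]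
      nlinarith [mul_pos hω0 (sub_pos.2 hω1)]

/-- backward bound for `δg`: for all `γ, ν ≥ 0` and every integer `n > 0`,
`(1/ḡₙ^γ) ∑_{0≤p<n} ḡ_p^ν ∏_{p<j<n} f'(ḡ_j)
   ≤ ω₀^{-γ} g⋆^{ν-γ}/(A-1) · exp[2(1-ω₀)(1+ω₀-Aω₀)/(ω₀(2-A))]`. -/
theorem stmt_8 (A a : ℝ) (hA1 : 1 < A) (hA2 : A < 2) (ha : 0 < a)
    (f : ℝ → ℝ) (hf : ∀ x, f x = A * x - a * x ^ 2)
    (gs : ℝ) (hgs : gs = (A - 1) / a)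
    (ω0 : ℝ) (hω0 : ω0 ∈ Set.Ioo (0 : ℝ) 1)
    (gbar : ℤ → ℝ) (hmem : ∀ n : ℤ, gbar n ∈ Set.Ioo 0 gs)
    (h0 : gbar 0 = ω0 * gs) (hrec : ∀ n : ℤ, gbar (n + 1) = f (gbar n))
    (γ ν : ℝ) (hγ : 0 ≤ γ) (hν : 0 ≤ ν) :
    ∀ n : ℤ, 0 < n →
      (1 / gbar n ^ γ) *
          ∑ p ∈ Finset.Ico (0 : ℤ) n, gbar p ^ ν * ∏ j ∈ Finset.Ioo p n, (A - 2 * a * gbar j) ≤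
        ω0 ^ (-γ) * gs ^ (ν - γ) / (A - 1) *
          Real.exp (2 * (1 - ω0) * (1 + ω0 - A * ω0) / (ω0 * (2 - A))) := by
  intro n hn
  obtain ⟨hω0_pos, hω0_lt⟩ := hω0
  have hgs_pos : 0 < gs := by rw [hgs]; exact div_pos (by linarith) ha
  have hrec' : ∀ k, gbar (k + 1) = A * gbar k - a * gbar k ^ 2 := fun k => (hrec k).trans (hf _)
  have hsum := logistic_backwardSum_le hA2 ha hgs hrec' hmem hν hn.le
  have hags : a * gs = A - 1 := by rw [hgs]; field_simp
  have hag0 : a * gbar 0 = ω0 * (A - 1) := by rw [h0, mul_left_comm, hags]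
  have hX : (1 - a * gbar 0) * (a * (gs - gbar 0)) / (a * gbar 0 * (2 - A)) =
      (1 - ω0) * (1 + ω0 - A * ω0) / (ω0 * (2 - A)) := by
    have : A - 1 ≠ 0 := by linarith
    rw [mul_sub, hag0, hags]; field_simp; ring
  rw [hX, hag0] at hsum
  set X := (1 - ω0) * (1 + ω0 - A * ω0) / (ω0 * (2 - A)) with hX_def
  have hpow : 1 / gbar n ^ γ ≤ (ω0 * gs) ^ (-γ) := by
    rw [one_div, ← rpow_neg (hmem n).1.le, ← h0]
    exact rpow_le_rpow_of_nonpos (hmem 0).1 (logistic_orbit_ge ha hgs hrec' hmem hn.le)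
      (neg_nonpos.2 hγ)
  calc _ ≤ (ω0 * gs) ^ (-γ) * (gs ^ ν / (ω0 * (A - 1)) * exp X) :=
        mul_le_mul hpow hsum (backwardSum_nonneg (fun p _ => rpow_nonneg (hmem p).1.le ν)
          (fun j _ => by nlinarith [mul_lt_mul_of_pos_left (hmem j).2 ha]) n) (by positivity)
    _ = ω0 ^ (-γ) * gs ^ (ν - γ) / (A - 1) * (1 / ω0 * exp X) := by
        rw [mul_rpow hω0_pos.le hgs_pos.le, rpow_sub hgs_pos, rpow_neg hgs_pos.le]
        field_simp
    _ ≤ ω0 ^ (-γ) * gs ^ (ν - γ) / (A - 1) * (exp X * exp X) := by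
        gcongr
        exact one_div_le_exp_one_sub_div hω0_pos hω0_lt (by linarith) (by nlinarith)
    _ = _ := by rw [← exp_add, hX_def]; ring_nf
end

section
/- Let $f(x) = Ax - ax^2$ with $A \in (1,2)$, $a>0$, $g_* = (A-1)/a$, $\omega_0 \in (0,1)$, and $(\bar g_n)_{n\in\mathbb{Z}}$ the orbit with $\bar g_0 = \omega_0 g_*$. For any integers $n \le p \le -1$, $\prod_{n \le j \le p} \frac{A}{f'(\bar g_j)} \le \exp\!\left[\frac{\omega_0\bigl(2 - A + \sqrt{A^2 - 4\omega_0(A-1)}\bigr)}{(1-\omega_0)\bigl(A - 2\omega_0(A-1)\bigr)}\right]$. -/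
/-!
Run backwards, the orbit contracts geometrically. If `f g ≤ ω₀ g*`, then
`(A - 2ag)² = A² - 4a f(g) ≥ A² - 4ω₀(A - 1)`, so `f(g)/g = (A + (A - 2ag))/2 ≥ 1/ρ`;
hence `ḡ_{-k} ≤ ω₀ g* ρ^k`. Each factor satisfies
`A/(A - 2aḡ_j) ≤ exp (2aḡ_j/(A - 2ω₀(A - 1)))`, so the product is at most the exponential of
a geometric series, and `ρ/(1 - ρ) = (2 - A + √(A² - 4ω₀(A - 1)))/(2(A - 1)(1 - ω₀))`.
-/

open Real Finset

/-- The factor `ρ` by which the orbit contracts at each backward step. -/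
noncomputable def backwardRate (A ω : ℝ) : ℝ := 2 / (A + √(A ^ 2 - 4 * ω * (A - 1)))

section BackwardRate

variable {A ω : ℝ}

lemma sq_two_sub_le (hA1 : 1 ≤ A) (hω : ω ≤ 1) : (2 - A) ^ 2 ≤ A ^ 2 - 4 * ω * (A - 1) := by
  nlinarith [mul_nonneg (sub_nonneg.2 hA1) (sub_nonneg.2 hω)]

lemma two_sub_lt_sqrt (hA1 : 1 < A) (hω : ω < 1) : 2 - A < √(A ^ 2 - 4 * ω * (A - 1)) :=
  calc 2 - A ≤ |2 - A| := le_abs_self _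
    _ = √((2 - A) ^ 2) := (sqrt_sq_eq_abs _).symm
    _ < √(A ^ 2 - 4 * ω * (A - 1)) :=
      sqrt_lt_sqrt (sq_nonneg _) (by nlinarith [mul_pos (sub_pos.2 hA1) (sub_pos.2 hω)])

lemma backwardRate_pos (hA : 0 < A) : 0 < backwardRate A ω :=
  div_pos two_pos (add_pos_of_pos_of_nonneg hA (sqrt_nonneg _))

lemma backwardRate_lt_one (hA1 : 1 < A) (hω : ω < 1) : backwardRate A ω < 1 := by
  have := two_sub_lt_sqrt hA1 hω
  rw [backwardRate, div_lt_one (by linarith)]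
  linarith

lemma backwardRate_div_one_sub (hA1 : 1 < A) (hω : ω < 1) :
    backwardRate A ω / (1 - backwardRate A ω) =
      (2 - A + √(A ^ 2 - 4 * ω * (A - 1))) / (2 * (A - 1) * (1 - ω)) := by
  set s := √(A ^ 2 - 4 * ω * (A - 1))
  have hs : 2 - A < s := two_sub_lt_sqrt hA1 hω
  have hsq : s ^ 2 = A ^ 2 - 4 * ω * (A - 1) :=
    sq_sqrt ((sq_nonneg _).trans (sq_two_sub_le hA1.le hω.le))
  have hAs : A + s ≠ 0 := by linarith
  have hAs2 : A + s - 2 ≠ 0 := by linarith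
  have hρ : backwardRate A ω / (1 - backwardRate A ω) = 2 / (A + s - 2) := by
    rw [backwardRate, one_sub_div hAs, div_div_div_cancel_right₀ hAs]
  rw [hρ, div_eq_div_iff hAs2 (by positivity)]
  linear_combination (-1) * hsq

end BackwardRate

lemma le_backwardRate_mul {A a ω x : ℝ} (hA : 0 < A) (hx : 0 ≤ x) (hxA : 2 * a * x ≤ A)
    (h : a * (A * x - a * x ^ 2) ≤ ω * (A - 1)) :
    x ≤ backwardRate A ω * (A * x - a * x ^ 2) := by
  have hs : √(A ^ 2 - 4 * ω * (A - 1)) ≤ A - 2 * a * x :=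
    (sqrt_le_left (by linarith)).2 (by nlinarith)
  rw [backwardRate, div_mul_eq_mul_div, le_div_iff₀ (by positivity)]
  nlinarith [mul_le_mul_of_nonneg_left hs hx]

lemma div_sub_le_exp_div_sub {A x x₀ : ℝ} (hx : 0 ≤ x) (hxx₀ : x ≤ x₀) (hx₀ : x₀ < A) :
    A / (A - x) ≤ exp (x / (A - x₀)) := by
  have hAx : 0 < A - x := by linarith
  calc A / (A - x) = x / (A - x) + 1 := by field_simp; ring
    _ ≤ x / (A - x₀) + 1 := by gcongr
    _ ≤ exp (x / (A - x₀)) := add_one_le_exp _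

lemma prod_div_sub_le_exp {ι : Type*} {s : Finset ι} {A x₀ : ℝ} {x : ι → ℝ}
    (hx : ∀ i ∈ s, 0 ≤ x i ∧ x i ≤ x₀) (hx₀ : x₀ < A) :
    ∏ i ∈ s, A / (A - x i) ≤ exp ((∑ i ∈ s, x i) / (A - x₀)) := by
  rw [sum_div, exp_sum]
  refine prod_le_prod (fun i hi => ?_) (fun i hi => ?_) <;> obtain ⟨hxi, hxi₀⟩ := hx i hi
  · exact div_nonneg (by linarith) (by linarith)
  · exact div_sub_le_exp_div_sub hxi hxi₀ hx₀

lemma sum_Icc_le_of_neg_le_geometric {u : ℤ → ℝ} {C ρ : ℝ} (hC : 0 ≤ C) (hρ0 : 0 ≤ ρ)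
    (hρ1 : ρ < 1) (hu : ∀ k : ℕ, u (-k) ≤ C * ρ ^ k) (n : ℤ) {p : ℤ} (hp : p ≤ -1) :
    ∑ j ∈ Icc n p, u j ≤ C * (ρ / (1 - ρ)) := by
  have hinj : Set.InjOn (fun j : ℤ => (-j).toNat) (Icc n p) := by
    intro x hx y hy h
    simp only [coe_Icc, Set.mem_Icc] at hx hy h
    omega
  have hsub : (Icc n p).image (fun j => (-j).toNat) ⊆ Ico 1 ((-n).toNat + 1) := by
    intro k hk
    simp only [mem_image, mem_Icc, mem_Ico] at hk ⊢
    omega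
  calc ∑ j ∈ Icc n p, u j ≤ ∑ j ∈ Icc n p, C * ρ ^ (-j).toNat := by
        refine sum_le_sum fun j hj => ?_
        have hj : ((-j).toNat : ℤ) = -j := by rw [mem_Icc] at hj; omega
        simpa [hj] using hu (-j).toNat
    _ = C * ∑ k ∈ (Icc n p).image (fun j => (-j).toNat), ρ ^ k := by
        rw [sum_image hinj, mul_sum]
    _ ≤ C * ∑ k ∈ Ico 1 ((-n).toNat + 1), ρ ^ k := by gcongr
    _ ≤ C * (ρ ^ 1 / (1 - ρ)) := by gcongr; exact geom_sum_Ico_le_of_lt_one hρ0 hρ1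
    _ = C * (ρ / (1 - ρ)) := by rw [pow_one]

lemma orbit_neg_le {A a ω : ℝ} {g : ℤ → ℝ} (hA1 : 1 < A) (hA2 : A < 2) (ha : 0 < a)
    (hω : ω < 1) (hmem : ∀ n, g n ∈ Set.Ioo 0 ((A - 1) / a)) (h0 : g 0 = ω * ((A - 1) / a))
    (hrec : ∀ n, g (n + 1) = A * g n - a * g n ^ 2) (k : ℕ) :
    g (-k) ≤ ω * ((A - 1) / a) * backwardRate A ω ^ k := by
  have hρ0 : 0 < backwardRate A ω := backwardRate_pos (by linarith)
  have hC : 0 < ω * ((A - 1) / a) := h0 ▸ (hmem 0).1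
  induction k with
  | zero => simp [h0]
  | succ k ih =>
    obtain ⟨hx0, hx⟩ := hmem (-(k + 1 : ℕ))
    have hfx : g (-k) = A * g (-(k + 1 : ℕ)) - a * g (-(k + 1 : ℕ)) ^ 2 := by
      rw [← hrec]; congr 1; push_cast; ring
    have hax : a * g (-(k + 1 : ℕ)) < A - 1 := by rwa [lt_div_iff₀ ha, mul_comm] at hx
    have hρk : backwardRate A ω ^ k ≤ 1 := pow_le_one₀ hρ0.le (backwardRate_lt_one hA1 hω).le
    have hg_le : g (-k) ≤ ω * ((A - 1) / a) := ih.trans (mul_le_of_le_one_right hC.le hρk)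
    calc g (-(k + 1 : ℕ)) ≤ backwardRate A ω * g (-k) := by
          rw [hfx]
          refine le_backwardRate_mul (by linarith) hx0.le (by linarith) ?_
          rw [← hfx]
          calc a * g (-k) ≤ a * (ω * ((A - 1) / a)) := by gcongr
            _ = ω * (A - 1) := by field_simp
      _ ≤ backwardRate A ω * (ω * ((A - 1) / a) * backwardRate A ω ^ k) := by gcongr
      _ = ω * ((A - 1) / a) * backwardRate A ω ^ (k + 1) := by ring

lemma mul_orbit_le_of_nonpos {A a ω : ℝ} {g : ℤ → ℝ} (hA1 : 1 < A) (hA2 : A < 2) (ha : 0 < a)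
    (hω : ω < 1) (hmem : ∀ n, g n ∈ Set.Ioo 0 ((A - 1) / a)) (h0 : g 0 = ω * ((A - 1) / a))
    (hrec : ∀ n, g (n + 1) = A * g n - a * g n ^ 2) {j : ℤ} (hj : j ≤ 0) :
    a * g j ≤ ω * (A - 1) := by
  have hρ := backwardRate_lt_one hA1 hω
  have hC : 0 < ω * ((A - 1) / a) := h0 ▸ (hmem 0).1
  obtain ⟨k, rfl⟩ := Int.exists_eq_neg_ofNat hj
  have hρk : backwardRate A ω ^ k ≤ 1 := pow_le_one₀ (backwardRate_pos (by linarith)).le hρ.le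
  calc a * g (-k) ≤ a * (ω * ((A - 1) / a) * backwardRate A ω ^ k) := by
        gcongr
        exact orbit_neg_le hA1 hA2 ha hω hmem h0 hrec k
    _ ≤ a * (ω * ((A - 1) / a)) :=
        mul_le_mul_of_nonneg_left (mul_le_of_le_one_right hC.le hρk) ha.le
    _ = ω * (A - 1) := by field_simp

/-- for `n ≤ p ≤ -1`,
`∏_{n≤j≤p} A/f'(ḡ_j) ≤ exp[ ω₀(2-A+√(A²-4ω₀(A-1))) / ((1-ω₀)(A-2ω₀(A-1))) ]`. -/
theorem stmt_9 (A a : ℝ) (hA1 : 1 < A) (hA2 : A < 2) (ha : 0 < a)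
    (f : ℝ → ℝ) (hf : ∀ x, f x = A * x - a * x ^ 2)
    (gs : ℝ) (hgs : gs = (A - 1) / a)
    (ω0 : ℝ) (hω0 : ω0 ∈ Set.Ioo (0 : ℝ) 1)
    (gbar : ℤ → ℝ) (hmem : ∀ n : ℤ, gbar n ∈ Set.Ioo 0 gs)
    (h0 : gbar 0 = ω0 * gs) (hrec : ∀ n : ℤ, gbar (n + 1) = f (gbar n)) :
    ∀ n p : ℤ, n ≤ p → p ≤ -1 →
      ∏ j ∈ Finset.Icc n p, A / (A - 2 * a * gbar j) ≤
        Real.exp (ω0 * (2 - A + Real.sqrt (A ^ 2 - 4 * ω0 * (A - 1))) /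
          ((1 - ω0) * (A - 2 * ω0 * (A - 1)))) := by
  intro n p _ hp
  obtain ⟨hω0, hω1⟩ := hω0
  subst hgs
  have hrec' : ∀ n, gbar (n + 1) = A * gbar n - a * gbar n ^ 2 := fun n => (hrec n).trans (hf _)
  have hdecay := orbit_neg_le hA1 hA2 ha hω1 hmem h0 hrec'
  have hsum := sum_Icc_le_of_neg_le_geometric (by positivity) (backwardRate_pos (by linarith)).le
    (backwardRate_lt_one hA1 hω1) hdecay n hp
  have hterm : ∀ j ∈ Icc n p, 0 ≤ 2 * a * gbar j ∧ 2 * a * gbar j ≤ 2 * ω0 * (A - 1) := by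
    intro j hj
    have hj : j ≤ 0 := by rw [mem_Icc] at hj; omega
    have := mul_orbit_le_of_nonpos hA1 hA2 ha hω1 hmem h0 hrec' hj
    exact ⟨by have := (hmem j).1; positivity, by linarith⟩
  have hden : 2 * ω0 * (A - 1) < A := by nlinarith
  calc ∏ j ∈ Icc n p, A / (A - 2 * a * gbar j)
      ≤ exp ((∑ j ∈ Icc n p, 2 * a * gbar j) / (A - 2 * ω0 * (A - 1))) :=
        prod_div_sub_le_exp hterm hden
    _ ≤ exp (2 * a * (ω0 * ((A - 1) / a) * (backwardRate A ω0 / (1 - backwardRate A ω0))) /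
          (A - 2 * ω0 * (A - 1))) := by
        rw [← mul_sum]
        gcongr
    _ = _ := by
        have hA1' : A - 1 ≠ 0 := by linarith
        have hω1' : 1 - ω0 ≠ 0 := by linarith
        have hden' : A - 2 * ω0 * (A - 1) ≠ 0 := by linarith
        rw [backwardRate_div_one_sub hA1 hω1]
        congr 1
        field_simp
end

section
/- Let $L \ge 2$ be an integer, $\ep \in (0, 1/2]$ with $A = L^{\ep} \in (1,2)$, $a > 0$, $g_* = (A-1)/a$, $\omega_0 \in (0,1)$, and $(\bar g_n)_{n\in\mathbb{Z}}$ the orbit of $f(x) = Ax - ax^2$ with $\bar g_0 = \omega_0 g_*$. Suppose $0 \le \gamma \le 1$, $\nu > 0$, and $\Upsilon := \frac{2 L^{\ep/\nu}}{A + \sqrt{A^2 - 4\omega_0(A-1)}} \in (0,1)$. Then for every integer $n < 0$, $\frac{1}{\bar g_n^{\gamma}} \sum_{n \le p < 0} \bar g_p^{\nu} \prod_{n \le j \le p} \frac{1}{f'(\bar g_j)} \;\le\; \frac{(\omega_0 g_*)^{\nu-\gamma}}{1 - \Upsilon^{\nu}} \exp\!\left[\frac{\omega_0\bigl(2 - A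 + \sqrt{A^2 - 4\omega_0(A-1)}\bigr)}{(1-\omega_0)\bigl(A - 2\omega_0(A-1)\bigr)}\right]$. -/
/-!
Write the orbit as `g (n + 1) = g n * (A - a * g n)`. Going backwards from `g 0 = ω₀ g⋆` it decays
at least geometrically with ratio `θ⁻¹`, where `θ = A - a g₋₁ = (A + √(A² - 4ω₀(A-1)))/2` because
`g₋₁` is the smaller root of `x (A - a x) = ω₀ g⋆`, and at most like `A⁻ᵏ`. Since
`(A - a x)/(A - 2 a x) ≤ exp (a x / B)` with `B = A - 2 a g 0 ≤ f'(g_j)`, the product of the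
`1/f'(g_j)` telescopes against `g_j / g_{j+1} = 1/(A - a g_j)` to `g n / g (p + 1)`, up to the
factor `exp (a/B ∑ g_j)` which the geometric decay bounds uniformly. What remains of the `p`-th
term is `g_p^ν g_p^{-γ} ≤ (ω₀ g⋆)^{ν-γ} (A θ^{-ν})^{-p} = (ω₀ g⋆)^{ν-γ} Υ^{-νp}`, a geometric
series.
-/

open Finset Real

theorem inv_sub_two_mul_le_inv_sub_mul_exp {A B a x : ℝ} (hax : 0 ≤ a * x) (hB : 0 < B)
    (hBx : B ≤ A - 2 * a * x) :
    (A - 2 * a * x)⁻¹ ≤ (A - a * x)⁻¹ * exp (a * x / B) := by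
  have hpos : 0 < A - 2 * a * x := hB.trans_le hBx
  have hpos' : 0 < A - a * x := by linarith
  calc (A - 2 * a * x)⁻¹ = (A - a * x)⁻¹ * (1 + a * x / (A - 2 * a * x)) := by
        field_simp; ring
    _ ≤ (A - a * x)⁻¹ * (1 + a * x / B) := by gcongr
    _ ≤ (A - a * x)⁻¹ * exp (a * x / B) := by
        gcongr; linarith [add_one_le_exp (a * x / B)]

theorem one_div_rpow_mul_div_le {x y z γ : ℝ} (hx : 0 < x) (hxy : x ≤ y) (hyz : y ≤ z)
    (hγ : γ ≤ 1) : 1 / x ^ γ * (x / z) ≤ 1 / y ^ γ := by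
  have hy : 0 < y := hx.trans_le hxy
  calc 1 / x ^ γ * (x / z) = x ^ (1 - γ) / z := by rw [rpow_sub hx, rpow_one]; ring
    _ ≤ y ^ (1 - γ) / y := by gcongr
    _ = 1 / y ^ γ := by rw [rpow_sub hy, rpow_one]; field_simp

theorem rpow_mul_one_div_rpow_le {c y A ρ γ ν : ℝ} (k : ℕ) (hc : 0 < c) (hy : 0 < y)
    (hA : 1 ≤ A) (hρ : 0 ≤ ρ) (hlo : c ≤ A ^ k * y) (hhi : y ≤ ρ ^ k * c)
    (hγ0 : 0 ≤ γ) (hγ1 : γ ≤ 1) (hν : 0 ≤ ν) :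
    y ^ ν * (1 / y ^ γ) ≤ c ^ (ν - γ) * (A * ρ ^ ν) ^ k := by
  have hAk : 0 < A ^ k := by positivity
  calc y ^ ν * (1 / y ^ γ) ≤ (ρ ^ k * c) ^ ν * (1 / (c / A ^ k) ^ γ) := by
        gcongr
        rwa [div_le_iff₀ hAk, mul_comm]
    _ = c ^ (ν - γ) * (ρ ^ ν) ^ k * (A ^ γ) ^ k := by
        rw [mul_rpow (by positivity) hc.le, div_rpow hc.le hAk.le, rpow_sub hc,
          ← rpow_pow_comm hρ, ← rpow_pow_comm (by linarith)]
        field_simp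
    _ ≤ c ^ (ν - γ) * (ρ ^ ν) ^ k * A ^ k := by
        gcongr
        simpa using rpow_le_rpow_of_exponent_le hA hγ1
    _ = c ^ (ν - γ) * (A * ρ ^ ν) ^ k := by ring

theorem sum_Ico_neg_le_mul_geom {u : ℤ → ℝ} {c q : ℝ} (n : ℤ) (hc : 0 ≤ c) (hq0 : 0 ≤ q)
    (hq1 : q < 1) (hu : ∀ p ∈ Ico n 0, u p ≤ c * q ^ (-p).toNat) :
    ∑ p ∈ Ico n 0, u p ≤ c * (q / (1 - q)) := by
  have hreindex : ∑ p ∈ Ico n 0, q ^ (-p).toNat = ∑ k ∈ Ico 1 ((-n).toNat + 1), q ^ k :=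
    sum_nbij' (fun p => (-p).toNat) (fun k => -(k : ℤ))
      (fun p hp => by simp only [mem_Ico] at hp ⊢; omega)
      (fun k hk => by simp only [mem_Ico] at hk ⊢; omega)
      (fun p hp => by simp only [mem_Ico] at hp; omega)
      (fun k _ => by simp) (fun _ _ => rfl)
  calc ∑ p ∈ Ico n 0, u p ≤ ∑ p ∈ Ico n 0, c * q ^ (-p).toNat := sum_le_sum hu
    _ = c * ∑ k ∈ Ico 1 ((-n).toNat + 1), q ^ k := by rw [← mul_sum, hreindex]
    _ ≤ c * (q / (1 - q)) := by
        gcongr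
        simpa using geom_sum_Ico_le_of_lt_one (m := 1) (n := (-n).toNat + 1) hq0 hq1

theorem two_mul_sub_eq_add_sqrt {A a x y : ℝ} (hxy : x * (A - a * x) = y)
    (hx : 0 ≤ A - 2 * a * x) : 2 * (A - a * x) = A + √(A ^ 2 - 4 * a * y) := by
  rw [← hxy, show A ^ 2 - 4 * a * (x * (A - a * x)) = (A - 2 * a * x) ^ 2 by ring, sqrt_sq hx]
  ring

theorem mul_sub_one_div_le_of_sq_eq {A B ω s : ℝ} (hA : 1 < A) (hω0 : 0 < ω) (hω1 : ω < 1)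
    (hB : 0 < B) (hs2 : s ^ 2 = A ^ 2 - 4 * ω * (A - 1)) (hs : 2 < A + s) :
    ω * (A - 1) / (B * ((A + s) / 2 - 1)) ≤ ω * (2 - A + s) / ((1 - ω) * B) := by
  rw [div_le_div_iff₀ (mul_pos hB (by linarith)) (mul_pos (by linarith) hB)]
  -- the left side is exactly half the right side, as `(2 - A + s) (A + s - 2) = 4 (A - 1) (1 - ω)`
  have hgap : 0 < ω * (A - 1) * (1 - ω) * B :=
    mul_pos (mul_pos (mul_pos hω0 (by linarith)) (by linarith)) hB
  linear_combination (-(ω * B / 2)) * hs2 + hgap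

namespace LogisticOrbit

variable {A a : ℝ} {g : ℤ → ℝ}

theorem strictMono (hrec : ∀ n, g (n + 1) = g n * (A - a * g n)) (hpos : ∀ n, 0 < g n)
    (hlt : ∀ n, a * g n < A - 1) : StrictMono g :=
  strictMono_int_of_lt_succ fun n => by
    rw [hrec]; exact lt_mul_right (hpos n) (by linarith [hlt n])

theorem le_pow_mul (hrec : ∀ n, g (n + 1) = g n * (A - a * g n)) (ha : 0 ≤ a) (hA : 0 ≤ A)
    (n : ℤ) (k : ℕ) : g (n + k) ≤ A ^ k * g n := by
  simpa using le_geom (u := fun i => g (n + i)) hA k fun i _ => by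
    push_cast
    rw [← add_assoc, hrec]
    nlinarith [mul_nonneg ha (sq_nonneg (g (n + i)))]

theorem sub_le_inv_pow_mul (hrec : ∀ n, g (n + 1) = g n * (A - a * g n))
    (hpos : ∀ n, 0 < g n) (hmono : Monotone g) (ha : 0 ≤ a) (n : ℤ) (k : ℕ) :
    g (n - k) ≤ (A - a * g (n - 1))⁻¹ ^ k * g n := by
  have hθ : 0 < A - a * g (n - 1) := by
    have h := hrec (n - 1)
    rw [sub_add_cancel] at h
    exact pos_of_mul_pos_right (h ▸ hpos n) (hpos _).le
  simpa using le_geom (u := fun i => g (n - i)) (inv_nonneg.2 hθ.le) k fun i _ => by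
    have h := hrec (n - (i + 1))
    rw [show n - (i + 1) + 1 = n - i by ring] at h
    push_cast
    rw [le_inv_mul_iff₀ hθ, h, mul_comm]
    gcongr
    · exact (hpos _).le
    · exact hmono (by omega)

theorem eq_mul_prod (hrec : ∀ n, g (n + 1) = g n * (A - a * g n)) {n m : ℤ} (hnm : n ≤ m) :
    g m = g n * ∏ j ∈ Ico n m, (A - a * g j) := by
  induction m, hnm using Int.leInduction with
  | base => simp
  | succ m hnm ih =>
    rw [hrec, ← insert_Ico_right_eq_Ico_add_one hnm, prod_insert right_notMem_Ico]
    nth_rw 1 [ih]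
    ring

theorem prod_inv_le (hrec : ∀ n, g (n + 1) = g n * (A - a * g n)) (hpos : ∀ n, 0 < g n)
    (ha : 0 ≤ a) {B : ℝ} (hB : 0 < B) {n p : ℤ} (hnp : n ≤ p + 1)
    (hBle : ∀ j ∈ Icc n p, B ≤ A - 2 * a * g j) :
    ∏ j ∈ Icc n p, (A - 2 * a * g j)⁻¹ ≤ g n / g (p + 1) * exp (a / B * ∑ j ∈ Icc n p, g j) := by
  calc ∏ j ∈ Icc n p, (A - 2 * a * g j)⁻¹
      ≤ ∏ j ∈ Icc n p, ((A - a * g j)⁻¹ * exp (a * g j / B)) :=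
        prod_le_prod (fun j hj => inv_nonneg.2 (hB.trans_le (hBle j hj)).le) fun j hj =>
          inv_sub_two_mul_le_inv_sub_mul_exp (mul_nonneg ha (hpos j).le) hB (hBle j hj)
    _ = g n / g (p + 1) * exp (a / B * ∑ j ∈ Icc n p, g j) := by
        rw [prod_mul_distrib, prod_inv_distrib, ← exp_sum, mul_sum, eq_mul_prod hrec hnp,
          Ico_add_one_right_eq_Icc, div_mul_cancel_left₀ (hpos n).ne']
        simp only [mul_div_right_comm a]

theorem sum_Ico_le (hrec : ∀ n, g (n + 1) = g n * (A - a * g n)) (hpos : ∀ n, 0 < g n)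
    (hmono : Monotone g) (ha : 0 ≤ a) {θ : ℝ} (hθ : A - a * g (-1) = θ) (hθ1 : 1 < θ)
    (n : ℤ) : ∑ j ∈ Ico n 0, g j ≤ g 0 / (θ - 1) := by
  have hρ1 : θ⁻¹ < 1 := inv_lt_one_of_one_lt₀ hθ1
  calc ∑ j ∈ Ico n 0, g j ≤ g 0 * (θ⁻¹ / (1 - θ⁻¹)) :=
        sum_Ico_neg_le_mul_geom n (hpos 0).le (by positivity) hρ1 fun p _ => by
          obtain ⟨k, rfl⟩ : ∃ k : ℕ, p = -k := ⟨(-p).toNat, by grind⟩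
          simpa [hθ, mul_comm] using sub_le_inv_pow_mul hrec hpos hmono ha 0 k
    _ = g 0 / (θ - 1) := by field_simp

theorem prod_inv_le_exp (hrec : ∀ n, g (n + 1) = g n * (A - a * g n)) (hpos : ∀ n, 0 < g n)
    (hmono : Monotone g) (ha : 0 ≤ a) {B θ : ℝ} (hB : 0 < B) (hBle : B ≤ A - 2 * a * g 0)
    (hθ : A - a * g (-1) = θ) (hθ1 : 1 < θ) {n p : ℤ} (hnp : n ≤ p) (hp : p < 0) :
    ∏ j ∈ Icc n p, (A - 2 * a * g j)⁻¹ ≤ g n / g (p + 1) * exp (a * g 0 / (B * (θ - 1))) := by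
  have hsum : ∑ j ∈ Icc n p, g j ≤ g 0 / (θ - 1) :=
    (sum_le_sum_of_subset_of_nonneg (Icc_subset_Ico_right hp) fun j _ _ => (hpos j).le).trans
      (sum_Ico_le hrec hpos hmono ha hθ hθ1 n)
  refine (prod_inv_le hrec hpos ha hB (by omega) fun j hj => hBle.trans ?_).trans ?_
  · gcongr
    exact hmono ((mem_Icc.1 hj).2.trans hp.le)
  · refine mul_le_mul_of_nonneg_left (exp_le_exp.2 ?_) (div_nonneg (hpos n).le (hpos _).le)
    calc a / B * ∑ j ∈ Icc n p, g j ≤ a / B * (g 0 / (θ - 1)) := by gcongr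
      _ = a * g 0 / (B * (θ - 1)) := by field_simp

theorem weighted_sum_le (hrec : ∀ n, g (n + 1) = g n * (A - a * g n)) (hpos : ∀ n, 0 < g n)
    (hlt : ∀ n, a * g n < A - 1) (ha : 0 ≤ a) {B θ γ ν : ℝ} (hB : 0 < B)
    (hBle : B ≤ A - 2 * a * g 0) (hθ : A - a * g (-1) = θ) (hγ0 : 0 ≤ γ) (hγ1 : γ ≤ 1)
    (hν : 0 ≤ ν) (hq : A * θ⁻¹ ^ ν < 1) (n : ℤ) :
    1 / g n ^ γ * ∑ p ∈ Ico n 0, g p ^ ν * ∏ j ∈ Icc n p, (A - 2 * a * g j)⁻¹ ≤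
      g 0 ^ (ν - γ) / (1 - A * θ⁻¹ ^ ν) * exp (a * g 0 / (B * (θ - 1))) := by
  have hmono := (strictMono hrec hpos hlt).monotone
  have hA : 1 ≤ A := by linarith [hlt 0, mul_nonneg ha (hpos 0).le]
  have hθ1 : 1 < θ := by linarith [hlt (-1)]
  set C := a * g 0 / (B * (θ - 1))
  have hterm : ∀ p ∈ Ico n 0, 1 / g n ^ γ * (g p ^ ν * ∏ j ∈ Icc n p, (A - 2 * a * g j)⁻¹) ≤
      (g 0 ^ (ν - γ) * exp C) * (A * θ⁻¹ ^ ν) ^ (-p).toNat := by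
    intro p hp
    obtain ⟨hnp, hp0⟩ := mem_Ico.1 hp
    obtain ⟨k, rfl⟩ : ∃ k : ℕ, p = -k := ⟨(-p).toNat, by grind⟩
    have hgn : 0 ≤ 1 / g n ^ γ := one_div_nonneg.2 (rpow_nonneg (hpos n).le γ)
    have hgk : 0 ≤ g (-k) ^ ν := rpow_nonneg (hpos _).le ν
    calc 1 / g n ^ γ * (g (-k) ^ ν * ∏ j ∈ Icc n (-k), (A - 2 * a * g j)⁻¹)
        ≤ 1 / g n ^ γ * (g (-k) ^ ν * (g n / g (-k + 1) * exp C)) := by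
          grw [prod_inv_le_exp hrec hpos hmono ha hB hBle hθ hθ1 hnp hp0]
      _ = g (-k) ^ ν * (1 / g n ^ γ * (g n / g (-k + 1))) * exp C := by ring
      _ ≤ g (-k) ^ ν * (1 / g (-k) ^ γ) * exp C := by
          gcongr
          exact one_div_rpow_mul_div_le (hpos n) (hmono hnp)
            (hmono (show -(k : ℤ) ≤ -k + 1 by omega)) hγ1
      _ ≤ g 0 ^ (ν - γ) * (A * θ⁻¹ ^ ν) ^ k * exp C := by
          refine mul_le_mul_of_nonneg_right ?_ (exp_pos C).le
          refine rpow_mul_one_div_rpow_le k (hpos 0) (hpos _) hA (by positivity) ?_ ?_ hγ0 hγ1 hν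
          · simpa using le_pow_mul hrec ha (by linarith) (-k) k
          · simpa [hθ] using sub_le_inv_pow_mul hrec hpos hmono ha 0 k
      _ = _ := by rw [neg_neg, Int.toNat_natCast]; ring
  have hcoef : 0 ≤ g 0 ^ (ν - γ) * exp C := mul_nonneg (rpow_nonneg (hpos 0).le _) (exp_pos C).le
  calc 1 / g n ^ γ * ∑ p ∈ Ico n 0, g p ^ ν * ∏ j ∈ Icc n p, (A - 2 * a * g j)⁻¹
      ≤ (g 0 ^ (ν - γ) * exp C) * (A * θ⁻¹ ^ ν / (1 - A * θ⁻¹ ^ ν)) := by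
        rw [mul_sum]
        exact sum_Ico_neg_le_mul_geom n hcoef (by positivity) hq hterm
    _ ≤ (g 0 ^ (ν - γ) * exp C) * (1 / (1 - A * θ⁻¹ ^ ν)) := by gcongr
    _ = g 0 ^ (ν - γ) / (1 - A * θ⁻¹ ^ ν) * exp C := by ring

end LogisticOrbit

theorem stmt_10_general (L : ℕ) (ε : ℝ)
    (A : ℝ) (hA : A = (L : ℝ) ^ ε) (hA1 : 1 < A) (hA2 : A < 2) (a : ℝ) (ha : 0 < a)
    (f : ℝ → ℝ) (hf : ∀ x, f x = A * x - a * x ^ 2)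
    (gs : ℝ) (hgs : gs = (A - 1) / a)
    (ω0 : ℝ) (hω0 : ω0 ∈ Set.Ioo (0 : ℝ) 1)
    (gbar : ℤ → ℝ) (hmem : ∀ n : ℤ, gbar n ∈ Set.Ioo 0 gs)
    (h0 : gbar 0 = ω0 * gs) (hrec : ∀ n : ℤ, gbar (n + 1) = f (gbar n))
    (γ ν : ℝ) (hγ0 : 0 ≤ γ) (hγ1 : γ ≤ 1) (hν : 0 < ν)
    (Υ : ℝ)
    (hΥ : Υ = 2 * (L : ℝ) ^ (ε / ν) / (A + Real.sqrt (A ^ 2 - 4 * ω0 * (A - 1))))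
    (hΥ01 : Υ ∈ Set.Ioo (0 : ℝ) 1) :
    ∀ n : ℤ, n < 0 →
      (1 / gbar n ^ γ) *
          ∑ p ∈ Finset.Ico n (0 : ℤ),
            gbar p ^ ν * ∏ j ∈ Finset.Icc n p, (A - 2 * a * gbar j)⁻¹ ≤
        (ω0 * gs) ^ (ν - γ) / (1 - Υ ^ ν) *
          Real.exp (ω0 * (2 - A + Real.sqrt (A ^ 2 - 4 * ω0 * (A - 1))) /
            ((1 - ω0) * (A - 2 * ω0 * (A - 1)))) := by
  intro n _
  obtain ⟨hω0, hω1⟩ := hω0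
  set s := √(A ^ 2 - 4 * ω0 * (A - 1))
  have hg : ∀ n, gbar (n + 1) = gbar n * (A - a * gbar n) := fun n => by rw [hrec, hf]; ring
  have hpos : ∀ n, 0 < gbar n := fun n => (hmem n).1
  have hlt : ∀ n, a * gbar n < A - 1 := fun n => by
    simpa [hgs, mul_div_cancel₀ _ ha.ne'] using mul_lt_mul_of_pos_left (hmem n).2 ha
  have hag0 : a * gbar 0 = ω0 * (A - 1) := by rw [h0, hgs]; field_simp
  have hB : 0 < A - 2 * ω0 * (A - 1) := by nlinarith
  have hθ : A - a * gbar (-1) = (A + s) / 2 := by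
    have hga := mul_lt_mul_of_pos_left (LogisticOrbit.strictMono hg hpos hlt neg_one_lt_zero) ha
    have h := two_mul_sub_eq_add_sqrt (by simpa using (hg (-1)).symm) (by linarith)
    rw [mul_assoc 4, hag0, ← mul_assoc] at h
    linarith
  have hΥν : Υ ^ ν = A * ((A + s) / 2)⁻¹ ^ ν := by
    rw [hΥ, show 2 * (L : ℝ) ^ (ε / ν) / (A + s) = (L : ℝ) ^ (ε / ν) * ((A + s) / 2)⁻¹ by
      field_simp, mul_rpow (by positivity) (by positivity), ← rpow_mul (by positivity),
      div_mul_cancel₀ _ hν.ne', hA]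
  have hexp := mul_sub_one_div_le_of_sq_eq hA1 hω0 hω1 hB (sq_sqrt (by nlinarith))
    (by linarith [hlt (-1)] : 2 < A + s)
  calc _ ≤ _ := LogisticOrbit.weighted_sum_le hg hpos hlt ha.le hB (by linarith) hθ hγ0 hγ1 hν.le
          (hΥν ▸ rpow_lt_one hΥ01.1.le hΥ01.2 hν) n
    _ ≤ _ := by
      rw [← hΥν, ← h0, hag0]
      have hcoef : 0 ≤ gbar 0 ^ (ν - γ) / (1 - Υ ^ ν) := div_nonneg (rpow_nonneg (hpos 0).le _)
        (sub_nonneg.2 (rpow_le_one hΥ01.1.le hΥ01.2.le hν.le))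
      gcongr

/-- forward bound for `δg`: with `A = L^ε`, `0 ≤ γ ≤ 1`, `ν > 0` and
`Υ = 2 L^{ε/ν}/(A+√(A²-4ω₀(A-1))) ∈ (0,1)`, for every integer `n < 0`,
`(1/ḡₙ^γ) ∑_{n≤p<0} ḡ_p^ν ∏_{n≤j≤p} 1/f'(ḡ_j)
  ≤ (ω₀ g⋆)^{ν-γ}/(1-Υ^ν) · exp[ ω₀(2-A+√(A²-4ω₀(A-1)))/((1-ω₀)(A-2ω₀(A-1))) ]`. -/
theorem stmt_10 (L : ℕ) (hL : 2 ≤ L) (ε : ℝ) (hε1 : 0 < ε) (hε2 : ε ≤ 1 / 2)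
    (A : ℝ) (hA : A = (L : ℝ) ^ ε) (hA1 : 1 < A) (hA2 : A < 2) (a : ℝ) (ha : 0 < a)
    (f : ℝ → ℝ) (hf : ∀ x, f x = A * x - a * x ^ 2)
    (gs : ℝ) (hgs : gs = (A - 1) / a)
    (ω0 : ℝ) (hω0 : ω0 ∈ Set.Ioo (0 : ℝ) 1)
    (gbar : ℤ → ℝ) (hmem : ∀ n : ℤ, gbar n ∈ Set.Ioo 0 gs)
    (h0 : gbar 0 = ω0 * gs) (hrec : ∀ n : ℤ, gbar (n + 1) = f (gbar n))
    (γ ν : ℝ) (hγ0 : 0 ≤ γ) (hγ1 : γ ≤ 1) (hν : 0 < ν)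
    (Υ : ℝ)
    (hΥ : Υ = 2 * (L : ℝ) ^ (ε / ν) / (A + Real.sqrt (A ^ 2 - 4 * ω0 * (A - 1))))
    (hΥ01 : Υ ∈ Set.Ioo (0 : ℝ) 1) :
    ∀ n : ℤ, n < 0 →
      (1 / gbar n ^ γ) *
          ∑ p ∈ Finset.Ico n (0 : ℤ),
            gbar p ^ ν * ∏ j ∈ Finset.Icc n p, (A - 2 * a * gbar j)⁻¹ ≤
        (ω0 * gs) ^ (ν - γ) / (1 - Υ ^ ν) *
          Real.exp (ω0 * (2 - A + Real.sqrt (A ^ 2 - 4 * ω0 * (A - 1))) /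
            ((1 - ω0) * (A - 2 * ω0 * (A - 1)))) :=
  stmt_10_general L ε A hA hA1 hA2 a ha f hf gs hgs ω0 hω0 gbar hmem h0 hrec γ ν hγ0 hγ1 hν Υ hΥ
    hΥ01
end
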